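/- Let n ≥ 2, e₁, …, eₙ the standard basis of ℝⁿ, Sᵢ = {eᵢ, 0} ∪ {eᵢ + 2e_j : j ≠ i} for i = 1, …, n, and Q̃ = conv(S₁ ∪ ⋯ ∪ Sₙ). Then every proper positive-dimensional face F of Q̃ satisfies at least one of: (A) F ∩ Sᵢ ≠ ∅ for all i ∈ {1, …, n}; (B) F ∩ Sᵢ is a singleton for some i; (C) with I := {i : F ∩ Sᵢ ≠ ∅}, there exists J ⊆ {1, …, n} with |J| = |I| such that F ∩ Sᵢ ⊆ span_ℝ{e_j : j ∈ J} for every i ∈ I, and the image of F under the orthogonal projection onto span_ℝ{e_j : j ∈ J} spans an affine subspace of dimension strictly less than |I|. -/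

import Mathlib

open MeasureTheory Pointwise

/-- `faceOf P α` is the face `(P)_α` of the set `P` with inner normal `α`. -/
def faceOf {d : ℕ} (P : Set (EuclideanSpace ℝ (Fin d)))
    (α : EuclideanSpace ℝ (Fin d)) : Set (EuclideanSpace ℝ (Fin d)) :=
  {q ∈ P | ∀ p ∈ P, inner (𝕜 := ℝ) q α ≤ inner (𝕜 := ℝ) p α}

/-- Orthogonal projection of `ℝᵈ` onto the coordinate subspace `span {e_j : j ∈ J}`. -/
noncomputable def coordProj {d : ℕ} (J : Finset (Fin d))
    (x : EuclideanSpace ℝ (Fin d)) : EuclideanSpace ℝ (Fin d) :=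
  (EuclideanSpace.equiv (Fin d) ℝ).symm (fun k => if k ∈ J then x k else 0)

/-- The support `Sᵢ = {eᵢ, 0} ∪ {eᵢ + 2eⱼ : j ≠ i}` of the Noonburg neural-network
system. -/
noncomputable def noonS (n : ℕ) (i : Fin n) : Set (EuclideanSpace ℝ (Fin n)) :=
  {EuclideanSpace.single i 1, 0} ∪
    {x | ∃ j : Fin n, j ≠ i ∧
      x = EuclideanSpace.single i 1 + (2 : ℝ) • EuclideanSpace.single j 1}

/-- The coordinate functional as a linear map. -/
def projLin (d : ℕ) (k : Fin d) : EuclideanSpace ℝ (Fin d) →ₗ[ℝ] ℝ where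
  toFun x := x k
  map_add' _ _ := rfl
  map_smul' _ _ := rfl

/-- The coordinate-sum functional as a linear map. -/
def sumLin (d : ℕ) : EuclideanSpace ℝ (Fin d) →ₗ[ℝ] ℝ where
  toFun x := ∑ k, x k
  map_add' x y := by simp [Finset.sum_add_distrib]
  map_smul' c x := by simp [Finset.mul_sum]

lemma sumLin_single (d : ℕ) (i : Fin d) (a : ℝ) :
    sumLin d (EuclideanSpace.single i a) = a := by
  simp [sumLin, EuclideanSpace.single_apply]

lemma hull_min {d : ℕ} (s : Set (EuclideanSpace ℝ (Fin d)))
    (α : EuclideanSpace ℝ (Fin d)) (m : ℝ)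
    (h : ∀ p ∈ s, m ≤ inner (𝕜 := ℝ) p α) :
    ∀ x ∈ convexHull ℝ s, m ≤ inner (𝕜 := ℝ) x α :=
  convexHull_min h (convex_halfSpace_ge
    ⟨fun x y => inner_add_left x y α, fun c x => real_inner_smul_left x α c⟩ m)

lemma face_linear_eq {d : ℕ} (s : Set (EuclideanSpace ℝ (Fin d)))
    (α : EuclideanSpace ℝ (Fin d)) (μ : ℝ)
    (hs : ∀ p ∈ s, μ ≤ inner (𝕜 := ℝ) p α)
    (L : EuclideanSpace ℝ (Fin d) →ₗ[ℝ] ℝ) (c : ℝ)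
    (hL : ∀ p ∈ s, inner (𝕜 := ℝ) p α = μ → L p = c)
    (x : EuclideanSpace ℝ (Fin d)) (hx : x ∈ convexHull ℝ s)
    (hxμ : inner (𝕜 := ℝ) x α = μ) : L x = c := by
  rw [convexHull_eq] at hx
  obtain ⟨ι, t, w, z, hw0, hw1, hz, hxe⟩ := hx
  rw [Finset.centerMass_eq_of_sum_1 _ _ hw1] at hxe
  have hsum : ∑ i ∈ t, w i * (inner (𝕜 := ℝ) (z i) α - μ) = 0 := by
    have h1 : inner (𝕜 := ℝ) (∑ i ∈ t, w i • z i) α = μ := by rw [hxe]; exact hxμ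
    rw [sum_inner] at h1
    simp_rw [real_inner_smul_left] at h1
    simp only [mul_sub]
    rw [Finset.sum_sub_distrib, h1, ← Finset.sum_mul, hw1, one_mul, sub_self]
  have hterm : ∀ i ∈ t, w i * (inner (𝕜 := ℝ) (z i) α - μ) = 0 :=
    (Finset.sum_eq_zero_iff_of_nonneg
      (fun i hi => mul_nonneg (hw0 i hi) (sub_nonneg.2 (hs _ (hz i hi))))).1 hsum
  have hLx : L x = ∑ i ∈ t, w i * L (z i) := by
    rw [← hxe, map_sum]; exact Finset.sum_congr rfl fun i _ => by rw [_root_.map_smul]; rfl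
  rw [hLx]
  have : ∀ i ∈ t, w i * L (z i) = w i * c := by
    intro i hi
    rcases eq_or_ne (w i) 0 with h | h
    · rw [h, zero_mul, zero_mul]
    · have := hterm i hi
      have h2 : inner (𝕜 := ℝ) (z i) α = μ := by
        rcases mul_eq_zero.1 this with h' | h'
        · exact absurd h' h
        · linarith [sub_eq_zero.1 h']
      rw [hL _ (hz i hi) h2]
  rw [Finset.sum_congr rfl this, ← Finset.sum_mul, hw1, one_mul]

lemma two_elts {γ : Type*} (s : Set γ) (hne : s.Nonempty) (h : ∀ a, s ≠ {a}) :
    ∃ x ∈ s, ∃ y ∈ s, x ≠ y := by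
  obtain ⟨x, hx⟩ := hne
  by_contra hc
  push_neg at hc
  exact h x (Set.eq_singleton_iff_unique_mem.2 ⟨hx, fun y hy => hc y hy x hx⟩)

lemma coordProj_apply {d : ℕ} (J : Finset (Fin d)) (x : EuclideanSpace ℝ (Fin d)) (k : Fin d) :
    coordProj J x k = if k ∈ J then x k else 0 := rfl

lemma inner_single_one {n : ℕ} (i : Fin n) (α : EuclideanSpace ℝ (Fin n)) :
    inner (𝕜 := ℝ) (EuclideanSpace.single i (1:ℝ)) α = α i := by
  rw [EuclideanSpace.inner_single_left]; simp

lemma inner_v {n : ℕ} (i j : Fin n) (α : EuclideanSpace ℝ (Fin n)) :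
    inner (𝕜 := ℝ) (EuclideanSpace.single i (1:ℝ) + (2:ℝ) • EuclideanSpace.single j 1) α
      = α i + 2 * α j := by
  rw [inner_add_left, real_inner_smul_left, inner_single_one, inner_single_one]

lemma v_apply {n : ℕ} (i j k : Fin n) :
    (EuclideanSpace.single i (1:ℝ) + (2:ℝ) • EuclideanSpace.single j 1
      : EuclideanSpace ℝ (Fin n)) k
      = (if k = i then (1:ℝ) else 0) + 2 * (if k = j then 1 else 0) := by
  simp [EuclideanSpace.single_apply]

lemma mem_noonS {n : ℕ} (i : Fin n) (p : EuclideanSpace ℝ (Fin n)) :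
    p ∈ noonS n i ↔ p = EuclideanSpace.single i 1 ∨ p = 0 ∨
      ∃ j : Fin n, j ≠ i ∧
        p = EuclideanSpace.single i 1 + (2 : ℝ) • EuclideanSpace.single j 1 := by
  simp [noonS, Set.mem_union, Set.mem_insert_iff, or_assoc]

lemma noonS_finite {n : ℕ} (i : Fin n) : (noonS n i).Finite := by
  apply Set.Finite.union
  · exact (Set.finite_singleton _).insert _
  · apply Set.Finite.subset (Set.finite_range
      (fun j : Fin n => EuclideanSpace.single i (1:ℝ) + (2:ℝ) • EuclideanSpace.single j 1))
    rintro x ⟨j, -, rfl⟩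
    exact ⟨j, rfl⟩

lemma mem_span_of_supp {d : ℕ} (J : Finset (Fin d)) (y : EuclideanSpace ℝ (Fin d))
    (h : ∀ k ∉ J, y k = 0) :
    y ∈ Submodule.span ℝ ((fun j => EuclideanSpace.single j (1:ℝ)) '' (J : Set (Fin d))) := by
  have huniv : y = ∑ k : Fin d, y k • EuclideanSpace.single k (1:ℝ) := by
    ext l
    rw [WithLp.ofLp_sum, Finset.sum_apply]
    simp [EuclideanSpace.single_apply]
  have h2 : ∑ k ∈ J, y k • EuclideanSpace.single k (1:ℝ)
      = ∑ k : Fin d, y k • EuclideanSpace.single k (1:ℝ) :=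
    Finset.sum_subset (Finset.subset_univ J) (fun k _ hk => by rw [h k hk, zero_smul])
  have hy : ∑ k ∈ J, y k • EuclideanSpace.single k (1:ℝ) = y := h2.trans huniv.symm
  exact hy ▸ Submodule.sum_mem _ fun k hk =>
    Submodule.smul_mem _ _ (Submodule.subset_span ⟨k, hk, rfl⟩)

/-- Every proper positive-dimensional face `F` of `Q̃ = conv(S₁ ∪ ⋯ ∪ Sₙ)` (Noonburg
supports) satisfies condition (A), (B), or (C). -/
theorem noonburg_face_ABC (n : ℕ) (hn : 2 ≤ n)
    (α : EuclideanSpace ℝ (Fin n)) (hα : α ≠ 0)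
    (F : Set (EuclideanSpace ℝ (Fin n)))
    (hF : F = faceOf (convexHull ℝ (⋃ i, noonS n i)) α)
    (hproper : F ≠ convexHull ℝ (⋃ i, noonS n i))
    (hposdim : ∃ x ∈ F, ∃ y ∈ F, x ≠ y) :
    -- (A)
    (∀ i : Fin n, (F ∩ noonS n i).Nonempty) ∨
    -- (B)
    (∃ i : Fin n, ∃ a, F ∩ noonS n i = {a}) ∨
    -- (C)
    (∃ J : Finset (Fin n),
      J.card = Set.ncard {i | (F ∩ noonS n i).Nonempty} ∧
      (∀ i, (F ∩ noonS n i).Nonempty →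
        F ∩ noonS n i ⊆
          (Submodule.span ℝ ((fun j => EuclideanSpace.single j (1 : ℝ)) ''
            (J : Set (Fin n))) : Submodule ℝ (EuclideanSpace ℝ (Fin n)))) ∧
      Module.finrank ℝ (affineSpan ℝ (coordProj J '' F)).direction <
        Set.ncard {i | (F ∩ noonS n i).Nonempty}) := by
  classical
  subst hF
  obtain ⟨x₀, hx₀, -⟩ := hposdim
  set S := ⋃ i, noonS n i with hSdef
  set μ := inner (𝕜 := ℝ) x₀ α with hμdef
  have hx₀P : x₀ ∈ convexHull ℝ S := hx₀.1
  have hmin : ∀ p ∈ convexHull ℝ S, μ ≤ inner (𝕜 := ℝ) p α := hx₀.2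
  have hSP : S ⊆ convexHull ℝ S := subset_convexHull ℝ S
  have hminS : ∀ p ∈ S, μ ≤ inner (𝕜 := ℝ) p α := fun p hp => hmin p (hSP hp)
  have hFmem : ∀ q, q ∈ faceOf (convexHull ℝ S) α ↔
      q ∈ convexHull ℝ S ∧ inner (𝕜 := ℝ) q α = μ := by
    intro q
    constructor
    · intro hq; exact ⟨hq.1, le_antisymm (hq.2 x₀ hx₀P) (hmin q hq.1)⟩
    · rintro ⟨hq, hq2⟩; exact ⟨hq, fun p hp => by rw [hq2]; exact hmin p hp⟩
  have h0S : (0 : EuclideanSpace ℝ (Fin n)) ∈ S :=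
    Set.mem_iUnion.2 ⟨⟨0, by omega⟩, (mem_noonS _ 0).2 (Or.inr (Or.inl rfl))⟩
  have heS : ∀ i : Fin n, EuclideanSpace.single i (1:ℝ) ∈ S :=
    fun i => Set.mem_iUnion.2 ⟨i, (mem_noonS i _).2 (Or.inl rfl)⟩
  have hvS : ∀ i j : Fin n, j ≠ i →
      (EuclideanSpace.single i (1:ℝ) + (2:ℝ) • EuclideanSpace.single j 1) ∈ S :=
    fun i j hj => Set.mem_iUnion.2 ⟨i, (mem_noonS i _).2 (Or.inr (Or.inr ⟨j, hj, rfl⟩))⟩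
  -- Case A : 0 ∈ F
  by_cases h0F : (0 : EuclideanSpace ℝ (Fin n)) ∈ faceOf (convexHull ℝ S) α
  · exact Or.inl fun i => ⟨0, h0F, (mem_noonS i 0).2 (Or.inr (Or.inl rfl))⟩
  have hμ0 : μ ≤ 0 := by simpa using hminS 0 h0S
  have hμneg : μ < 0 := lt_of_le_of_ne hμ0 fun h =>
    h0F ((hFmem 0).2 ⟨hSP h0S, by simp [← h]⟩)
  -- Case B (prime) : some eᵢ ∈ F
  by_cases heF : ∃ i : Fin n, EuclideanSpace.single i (1:ℝ) ∈ faceOf (convexHull ℝ S) α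
  · obtain ⟨i, hi⟩ := heF
    refine Or.inr (Or.inl ⟨i, EuclideanSpace.single i 1, ?_⟩)
    have hαi : α i = μ := by
      have := ((hFmem _).1 hi).2
      rwa [inner_single_one] at this
    apply Set.eq_singleton_iff_unique_mem.2
    refine ⟨⟨hi, (mem_noonS i _).2 (Or.inl rfl)⟩, ?_⟩
    rintro x ⟨hxF, hxS⟩
    rcases (mem_noonS i x).1 hxS with rfl | rfl | ⟨j, hj, rfl⟩
    · rfl
    · exact absurd hxF h0F
    · exfalso
      have h1 : α i + 2 * α j = μ := by
        have := ((hFmem _).1 hxF).2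
        rwa [inner_v] at this
      have h2 : μ ≤ α j + 2 * α i := by
        have := hminS _ (hvS j i (Ne.symm hj))
        rwa [inner_v] at this
      linarith
  push_neg at heF
  -- characterization of F ∩ Sᵢ
  have hFS : ∀ (i : Fin n) (x : EuclideanSpace ℝ (Fin n)),
      x ∈ faceOf (convexHull ℝ S) α ∩ noonS n i ↔
        ∃ j, j ≠ i ∧ α i + 2 * α j = μ ∧
          x = EuclideanSpace.single i 1 + (2:ℝ) • EuclideanSpace.single j 1 := by
    intro i x
    constructor
    · rintro ⟨hxF, hxS⟩
      rcases (mem_noonS i x).1 hxS with rfl | rfl | ⟨j, hj, rfl⟩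
      · exact absurd hxF (heF i)
      · exact absurd hxF h0F
      · refine ⟨j, hj, ?_, rfl⟩
        have := ((hFmem _).1 hxF).2
        rwa [inner_v] at this
    · rintro ⟨j, hj, hsum, rfl⟩
      exact ⟨(hFmem _).2 ⟨hSP (hvS i j hj), by rw [inner_v]; exact hsum⟩,
        (mem_noonS i _).2 (Or.inr (Or.inr ⟨j, hj, rfl⟩))⟩
  -- Case B
  by_cases hB : ∃ i : Fin n, ∃ a, faceOf (convexHull ℝ S) α ∩ noonS n i = {a}
  · exact Or.inr (Or.inl hB)
  push_neg at hB
  refine Or.inr (Or.inr ?_)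
  -- key : every occupied index has value μ/3
  have hpair : ∀ i : Fin n, (faceOf (convexHull ℝ S) α ∩ noonS n i).Nonempty →
      μ = 3 * α i := by
    intro i hne
    obtain ⟨x, hx, y, hy, hxy⟩ := two_elts _ hne (hB i)
    obtain ⟨j, hj, hjsum, rfl⟩ := (hFS i x).1 hx
    obtain ⟨k, hk, hksum, rfl⟩ := (hFS i y).1 hy
    have hjk : j ≠ k := fun h => hxy (by rw [h])
    have h1 : μ ≤ α j + 2 * α k := by
      have := hminS _ (hvS j k (Ne.symm hjk))
      rwa [inner_v] at this
    have h2 : μ ≤ α j + 2 * α i := by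
      have := hminS _ (hvS j i (Ne.symm hj))
      rwa [inner_v] at this
    linarith
  -- anchor
  have hSfin : S.Finite := Set.finite_iUnion noonS_finite
  obtain ⟨p₀, hp₀S, hp₀min⟩ :=
    Set.exists_min_image S (fun p => inner (𝕜 := ℝ) p α) hSfin ⟨0, h0S⟩
  have hp₀μ : inner (𝕜 := ℝ) p₀ α = μ :=
    le_antisymm (hull_min S α _ hp₀min x₀ hx₀P) (hminS p₀ hp₀S)
  have hp₀F : p₀ ∈ faceOf (convexHull ℝ S) α := (hFmem _).2 ⟨hSP hp₀S, hp₀μ⟩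
  obtain ⟨i₀, hi₀⟩ := Set.mem_iUnion.1 hp₀S
  have hI₀ : (faceOf (convexHull ℝ S) α ∩ noonS n i₀).Nonempty := ⟨p₀, hp₀F, hi₀⟩
  have hμ3 : μ = 3 * α i₀ := hpair i₀ hI₀
  set t := α i₀ with ht
  obtain ⟨x₁, hx₁⟩ := hI₀
  obtain ⟨j₀, hj₀ne, hj₀sum, -⟩ := (hFS i₀ x₁).1 hx₁
  have hαj₀ : α j₀ = t := by linarith [ht, hμ3, hj₀sum]
  set J := Finset.univ.filter (fun k => α k = t) with hJdef
  have hJmem : ∀ k, k ∈ J ↔ α k = t := by intro k; simp [hJdef]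
  have hi₀J : i₀ ∈ J := (hJmem i₀).2 rfl
  have hj₀J : j₀ ∈ J := (hJmem j₀).2 hαj₀
  have hIJ : {i | (faceOf (convexHull ℝ S) α ∩ noonS n i).Nonempty} = ↑J := by
    ext i
    rw [Set.mem_setOf_eq, Finset.mem_coe, hJmem]
    constructor
    · intro hne
      have := hpair i hne
      linarith [ht]
    · intro hαi
      by_cases hii : i = i₀
      · refine ⟨_, (hFS i _).2 ⟨j₀, ?_, ?_, rfl⟩⟩
        · rw [hii]; exact hj₀ne
        · rw [hii, hαj₀]; linarith [ht]
      · refine ⟨_, (hFS i _).2 ⟨i₀, Ne.symm hii, ?_, rfl⟩⟩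
        linarith [ht, hαi, hμ3]
  have hcard : J.card = Set.ncard {i | (faceOf (convexHull ℝ S) α ∩ noonS n i).Nonempty} := by
    rw [hIJ, Set.ncard_coe_finset]
  -- classification of minimizing vertices
  have hminvert : ∀ p ∈ S, inner (𝕜 := ℝ) p α = μ →
      ∃ a b : Fin n, b ≠ a ∧ a ∈ J ∧ b ∈ J ∧
        p = EuclideanSpace.single a 1 + (2:ℝ) • EuclideanSpace.single b 1 := by
    intro p hpS hpμ
    obtain ⟨i, hpi⟩ := Set.mem_iUnion.1 hpS
    have hpF : p ∈ faceOf (convexHull ℝ S) α := (hFmem p).2 ⟨hSP hpS, hpμ⟩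
    have hne : (faceOf (convexHull ℝ S) α ∩ noonS n i).Nonempty := ⟨p, hpF, hpi⟩
    have hαi : α i = t := by have := hpair i hne; linarith [ht]
    obtain ⟨j, hj, hjsum, rfl⟩ := (hFS i p).1 ⟨hpF, hpi⟩
    have hαj : α j = t := by linarith [ht, hαi, hjsum, hμ3]
    exact ⟨i, j, hj, (hJmem i).2 hαi, (hJmem j).2 hαj, rfl⟩
  -- support of F
  have hsupp : ∀ x ∈ faceOf (convexHull ℝ S) α, ∀ k, k ∉ J → x k = 0 := by
    intro x hx k hk
    have := face_linear_eq S α μ hminS (projLin n k) 0 ?_ x hx.1 ((hFmem x).1 hx).2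
    · exact this
    · intro p hpS hpμ
      obtain ⟨a, b, hba, haJ, hbJ, rfl⟩ := hminvert p hpS hpμ
      show (EuclideanSpace.single a (1:ℝ) + (2:ℝ) • EuclideanSpace.single b 1
        : EuclideanSpace ℝ (Fin n)) k = 0
      rw [v_apply]
      have hka : k ≠ a := fun h => hk (h ▸ haJ)
      have hkb : k ≠ b := fun h => hk (h ▸ hbJ)
      simp [hka, hkb]
  have hsum3 : ∀ x ∈ faceOf (convexHull ℝ S) α, sumLin n x = 3 := by
    intro x hx
    apply face_linear_eq S α μ hminS (sumLin n) 3 ?_ x hx.1 ((hFmem x).1 hx).2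
    intro p hpS hpμ
    obtain ⟨a, b, hba, haJ, hbJ, rfl⟩ := hminvert p hpS hpμ
    rw [map_add, _root_.map_smul, sumLin_single, sumLin_single]
    norm_num [smul_eq_mul]
  have hprojF : ∀ x ∈ faceOf (convexHull ℝ S) α, coordProj J x = x := by
    intro x hx
    ext k
    rw [coordProj_apply]
    split_ifs with h
    · rfl
    · exact (hsupp x hx k h).symm
  have himg : coordProj J '' faceOf (convexHull ℝ S) α = faceOf (convexHull ℝ S) α := by
    apply Set.Subset.antisymm
    · rintro _ ⟨x, hx, rfl⟩
      rw [hprojF x hx]; exact hx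
    · intro x hx
      exact ⟨x, hx, hprojF x hx⟩
  set U₀ := Submodule.span ℝ ((fun j => EuclideanSpace.single j (1:ℝ)) '' (J : Set (Fin n)))
    with hU₀
  set V := U₀ ⊓ LinearMap.ker (sumLin n) with hV
  set p₁ := EuclideanSpace.single i₀ (1:ℝ) + (2:ℝ) • EuclideanSpace.single j₀ 1 with hp₁
  have hp₁F : p₁ ∈ faceOf (convexHull ℝ S) α :=
    ((hFS i₀ p₁).2 ⟨j₀, hj₀ne, by linarith [ht, hαj₀, hμ3], rfl⟩).1
  have hFsub : faceOf (convexHull ℝ S) α ⊆ (AffineSubspace.mk' p₁ V : Set _) := by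
    intro x hx
    rw [SetLike.mem_coe, AffineSubspace.mem_mk']
    refine Submodule.mem_inf.2 ⟨?_, ?_⟩
    · apply mem_span_of_supp
      intro k hk
      show (x - p₁) k = 0
      rw [PiLp.sub_apply, hsupp x hx k hk, hsupp p₁ hp₁F k hk, sub_self]
    · rw [LinearMap.mem_ker]
      show sumLin n (x - p₁) = 0
      rw [map_sub, hsum3 x hx, hsum3 p₁ hp₁F, sub_self]
  have hfinV : Module.finrank ℝ V < J.card := by
    have hlt : V < U₀ := by
      rw [SetLike.lt_iff_le_and_exists]
      refine ⟨inf_le_left, EuclideanSpace.single i₀ 1,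
        Submodule.subset_span ⟨i₀, hi₀J, rfl⟩, fun h => ?_⟩
      have := (Submodule.mem_inf.1 h).2
      rw [LinearMap.mem_ker, sumLin_single] at this
      norm_num at this
    have h1 : Module.finrank ℝ V < Module.finrank ℝ U₀ :=
      Submodule.finrank_lt_finrank_of_lt hlt
    have h2 : Module.finrank ℝ U₀ ≤ J.card := by
      have hcoe : ((fun j => EuclideanSpace.single j (1:ℝ)) '' (J : Set (Fin n)))
          = ↑(J.image (fun j => EuclideanSpace.single j (1:ℝ))) :=
        (Finset.coe_image).symm
      rw [hU₀, hcoe]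
      exact le_trans (finrank_span_finset_le_card _) Finset.card_image_le
    omega
  refine ⟨J, hcard, ?_, ?_⟩
  · intro i hne x hx
    obtain ⟨j, hj, hjsum, rfl⟩ := (hFS i x).1 hx
    have hαi : α i = t := by have := hpair i hne; linarith [ht]
    have hαj : α j = t := by linarith [ht, hαi, hjsum, hμ3]
    exact Submodule.add_mem _ (Submodule.subset_span ⟨i, (hJmem i).2 hαi, rfl⟩)
      (Submodule.smul_mem _ _ (Submodule.subset_span ⟨j, (hJmem j).2 hαj, rfl⟩))
  · rw [← hcard, himg]
    calc Module.finrank ℝ (affineSpan ℝ (faceOf (convexHull ℝ S) α)).direction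
        ≤ Module.finrank ℝ V := by
          apply Submodule.finrank_mono
          rw [← AffineSubspace.direction_mk' p₁ V]
          exact AffineSubspace.direction_le (affineSpan_le.2 hFsub)
      _ < J.card := hfinV
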